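/- Let r ≥ 1 be an odd integer and G a graph. For any partition (A, Ā) of V(G), if G^r admits an induced matching of size w+1 between A and Ā (i.e., independent sets X ⊆ A, Y ⊆ Ā in G^r with |X| = |Y| = w+1 such that the bipartite graph of G^r between X and Y is a perfect matching), then G also admits an induced matching of size w+1 between A and Ā. -/

import Mathlib

/-!
For each matched pair `x, f x` of `G^r`, a walk of length at most `r` from `x ∈ A` to
`f x ∉ A` has an edge `a b` leaving `A`; these edges form the induced matching in `G`. If two of
them, coming from pairs `(x, y)` and `(x', y')`, were joined by an edge, then concatenating it
with pieces of the two walks would give four walks, between `x, x'`, `y, y'`, `x, y'` and `y, x'`,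
each of length more than `r` since the matching in `G^r` is induced. Adding up these four bounds
leaves no room except in one tight case, where `r` would have to be even.
-/

/-- The `r`-th power of a graph `G`: two distinct vertices are adjacent iff their distance
in `G` is at most `r` (i.e. iff some walk of length at most `r` joins them). -/
def SimpleGraph.power {V : Type*} (G : SimpleGraph V) (r : ℕ) : SimpleGraph V where
  Adj u v := u ≠ v ∧ ∃ p : G.Walk u v, p.length ≤ r
  symm := by
    constructor
    rintro u v ⟨h, p, hp⟩
    exact ⟨h.symm, p.reverse, by simpa using hp⟩
  loopless := by constructor; rintro u ⟨h, -⟩; exact h rfl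

namespace SimpleGraph

open Finset

variable {V : Type*} (G : SimpleGraph V)

def HasInducedMatching [DecidableEq V] (A : Set V) (s : ℕ) : Prop :=
  ∃ (X Y : Finset V) (f : V → V), (X : Set V) ⊆ A ∧ (Y : Set V) ⊆ Aᶜ ∧
    X.card = s ∧ Y.card = s ∧
    (∀ x ∈ X, ∀ y ∈ X, ¬ G.Adj x y) ∧
    (∀ x ∈ Y, ∀ y ∈ Y, ¬ G.Adj x y) ∧
    Set.InjOn f X ∧ Y = X.image f ∧
    (∀ x ∈ X, G.Adj x (f x)) ∧
    (∀ x ∈ X, ∀ y ∈ Y, G.Adj x y → y = f x)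

/-- The edge `ab` lies on a walk of length at most `r` from `x` to `y`, traversed from `a` to `b`. -/
def OnShortWalk (r : ℕ) (x y a b : V) : Prop :=
  G.Adj a b ∧ ∃ ℓ m : ℕ, G.edist x a ≤ ℓ ∧ G.edist b y ≤ m ∧ ℓ + 1 + m ≤ r

variable {G}

lemma power_adj_iff {r : ℕ} {u v : V} : (G.power r).Adj u v ↔ u ≠ v ∧ G.edist u v ≤ r := by
  refine and_congr_right fun _ => ⟨fun ⟨p, hp⟩ => (G.edist_le p).trans (by exact_mod_cast hp),
    fun h => ?_⟩
  obtain ⟨p, hp⟩ := G.exists_walk_of_edist_ne_top (h.trans_lt (ENat.natCast_lt_top r)).ne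
  exact ⟨p, by rw [← hp] at h; exact_mod_cast h⟩

lemma lt_edist_of_not_power_adj {r : ℕ} {u v : V} (huv : u ≠ v) (h : ¬ (G.power r).Adj u v) :
    (r : ℕ∞) < G.edist u v :=
  not_le.mp fun hle => h (power_adj_iff.mpr ⟨huv, hle⟩)

lemma edist_le_add_of_le {u v w : V} {m n : ℕ} (huv : G.edist u v ≤ m) (hvw : G.edist v w ≤ n) :
    G.edist u w ≤ ↑(m + n) :=
  G.edist_triangle.trans (by push_cast; exact add_le_add huv hvw)

lemma Adj.edist_le_one {u v : V} (h : G.Adj u v) : G.edist u v ≤ (1 : ℕ) := by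
  simp [edist_eq_one_iff_adj.mpr h]

lemma Walk.exists_onShortWalk (A : Set V) {x y : V} (p : G.Walk x y) (hx : x ∈ A) (hy : y ∉ A) :
    ∃ a ∈ A, ∃ b ∉ A, G.OnShortWalk p.length x y a b := by
  induction p with
  | nil => exact absurd hx hy
  | @cons x x' y hxx' q ih =>
    by_cases hx' : x' ∈ A
    · obtain ⟨a, ha, b, hb, hab, ℓ, m, hxa, hby, hlen⟩ := ih hx' hy
      refine ⟨a, ha, b, hb, hab, 1 + ℓ, m, edist_le_add_of_le hxx'.edist_le_one hxa, hby, ?_⟩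
      simp only [length_cons]
      omega
    · refine ⟨x, hx, x', hx', hxx', 0, q.length, by simp, G.edist_le q, ?_⟩
      simp only [length_cons]
      omega

lemma OnShortWalk.mono {r r' : ℕ} {x y a b : V} (h : G.OnShortWalk r x y a b) (hr : r ≤ r') :
    G.OnShortWalk r' x y a b := by
  obtain ⟨hab, ℓ, m, hxa, hby, hlen⟩ := h
  exact ⟨hab, ℓ, m, hxa, hby, hlen.trans hr⟩

lemma OnShortWalk.symm {r : ℕ} {x y a b : V} (h : G.OnShortWalk r x y a b) :
    G.OnShortWalk r y x b a := by
  obtain ⟨hab, ℓ, m, hxa, hby, hlen⟩ := h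
  exact ⟨hab.symm, m, ℓ, by rwa [edist_comm], by rwa [edist_comm], by omega⟩

lemma OnShortWalk.not_adj {r : ℕ} (hr : Odd r) {x y a b x' y' a' b' : V}
    (h : G.OnShortWalk r x y a b) (h' : G.OnShortWalk r x' y' a' b')
    (hxx' : r < G.edist x x') (hyy' : r < G.edist y y')
    (hxy' : r < G.edist x y') (hyx' : r < G.edist y x') :
    ¬ G.Adj a a' ∧ ¬ G.Adj a b' := by
  obtain ⟨hab, ℓ, m, hxa, hby, hlen⟩ := h
  obtain ⟨hab', ℓ', m', hxa', hby', hlen'⟩ := h'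
  rw [edist_comm] at hby hxa'
  have lt_of_le : ∀ {u v : V} {n : ℕ}, (r : ℕ∞) < G.edist u v → G.edist u v ≤ n → r < n :=
    fun huv hn => by exact_mod_cast huv.trans_le hn
  obtain ⟨k, rfl⟩ := hr
  constructor
  · intro haa'
    have := lt_of_le hxx' (edist_le_add_of_le (edist_le_add_of_le hxa haa'.edist_le_one) hxa')
    have := lt_of_le hyy' (edist_le_add_of_le (edist_le_add_of_le (edist_le_add_of_le
      (edist_le_add_of_le hby hab.symm.edist_le_one) haa'.edist_le_one) hab'.edist_le_one) hby')
    have := lt_of_le hxy' (edist_le_add_of_le (edist_le_add_of_le (edist_le_add_of_le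
      hxa haa'.edist_le_one) hab'.edist_le_one) hby')
    have := lt_of_le hyx' (edist_le_add_of_le (edist_le_add_of_le (edist_le_add_of_le
      hby hab.symm.edist_le_one) haa'.edist_le_one) hxa')
    omega
  · intro hab''
    have := lt_of_le hxy' (edist_le_add_of_le (edist_le_add_of_le hxa hab''.edist_le_one) hby')
    have := lt_of_le hxx' (edist_le_add_of_le (edist_le_add_of_le (edist_le_add_of_le
      hxa hab''.edist_le_one) hab'.symm.edist_le_one) hxa')
    have := lt_of_le hyy' (edist_le_add_of_le (edist_le_add_of_le (edist_le_add_of_le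
      hby hab.symm.edist_le_one) hab''.edist_le_one) hby')
    have := lt_of_le hyx' (edist_le_add_of_le (edist_le_add_of_le (edist_le_add_of_le
      (edist_le_add_of_le hby hab.symm.edist_le_one) hab''.edist_le_one)
      hab'.symm.edist_le_one) hxa')
    omega

lemma hasInducedMatching_of_edges [DecidableEq V] {A : Set V} {X : Finset V}
    {a b : V → V} (ha : ∀ x ∈ X, a x ∈ A) (hb : ∀ x ∈ X, b x ∉ A)
    (hab : ∀ x ∈ X, G.Adj (a x) (b x))
    (haa : ∀ x ∈ X, ∀ x' ∈ X, x ≠ x' → ¬ G.Adj (a x) (a x'))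
    (hbb : ∀ x ∈ X, ∀ x' ∈ X, x ≠ x' → ¬ G.Adj (b x) (b x'))
    (hab' : ∀ x ∈ X, ∀ x' ∈ X, x ≠ x' → ¬ G.Adj (a x) (b x')) :
    G.HasInducedMatching A X.card := by
  cases isEmpty_or_nonempty V
  · exact ⟨∅, ∅, id, by simp [X.eq_empty_of_isEmpty]⟩
  have ha_inj : Set.InjOn a X := fun x hx x' hx' he => by_contra fun hne =>
    hab' x hx x' hx' hne (he ▸ hab x' hx')
  have hb_inj : Set.InjOn b X := fun x hx x' hx' he => by_contra fun hne =>
    hab' x hx x' hx' hne (he ▸ hab x hx)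
  have hinv : ∀ x ∈ X, Function.invFunOn a X (a x) = x := fun x hx =>
    ha_inj.leftInvOn_invFunOn hx
  refine ⟨X.image a, X.image b, b ∘ Function.invFunOn a X, ?_, ?_, card_image_of_injOn ha_inj,
    card_image_of_injOn hb_inj, ?_, ?_, ?_, ?_, ?_, ?_⟩
  · simpa [Set.subset_def] using ha
  · simpa [Set.subset_def] using hb
  · simp only [forall_mem_image]
    intro x hx x' hx'
    rcases eq_or_ne x x' with rfl | hne
    exacts [G.irrefl, haa x hx x' hx' hne]
  · simp only [forall_mem_image]
    intro x hx x' hx'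
    rcases eq_or_ne x x' with rfl | hne
    exacts [G.irrefl, hbb x hx x' hx' hne]
  · simp only [coe_image, Set.InjOn, Set.forall_mem_image, Function.comp_apply]
    intro x hx x' hx' he
    rw [hinv x hx, hinv x' hx'] at he
    rw [hb_inj hx hx' he]
  · rw [image_image]
    exact image_congr fun x hx => by simp [hinv x hx]
  · simp only [forall_mem_image, Function.comp_apply]
    exact fun x hx => by simpa only [hinv x hx] using hab x hx
  · simp only [forall_mem_image, Function.comp_apply]
    intro x hx x' hx' hadj
    rw [hinv x hx]
    by_contra hne
    exact hab' x hx x' hx' (by rintro rfl; exact hne rfl) hadj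

theorem HasInducedMatching.of_power [DecidableEq V] {r s : ℕ} (hr : Odd r) {A : Set V}
    (h : (G.power r).HasInducedMatching A s) : G.HasInducedMatching A s := by
  obtain ⟨X, -, f, hXA, hYA, rfl, -, hXind, hYind, hf, rfl, hmatch, huniq⟩ := h
  have hfY : ∀ x ∈ X, f x ∈ X.image f := fun x hx => mem_image_of_mem f hx
  have far : ∀ x ∈ X, ∀ x' ∈ X, x ≠ x' →
      (r : ℕ∞) < G.edist x x' ∧ (r : ℕ∞) < G.edist (f x) (f x') ∧ (r : ℕ∞) < G.edist x (f x') := by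
    intro x hx x' hx' hne
    have hfne : f x ≠ f x' := fun he => hne (hf hx hx' he)
    refine ⟨lt_edist_of_not_power_adj hne (hXind x hx x' hx'),
      lt_edist_of_not_power_adj hfne (hYind _ (hfY x hx) _ (hfY x' hx')), lt_edist_of_not_power_adj ?_ ?_⟩
    · exact fun he => hYA (hfY x' hx') (he ▸ hXA hx)
    · exact fun hadj => hfne (huniq x hx _ (hfY x' hx') hadj).symm
  have hcross : ∀ x ∈ X, ∃ a ∈ A, ∃ b ∉ A, G.OnShortWalk r x (f x) a b := by
    intro x hx
    obtain ⟨-, p, hp⟩ := hmatch x hx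
    obtain ⟨a, ha, b, hb, hab⟩ := p.exists_onShortWalk A (hXA hx) (hYA (hfY x hx))
    exact ⟨a, ha, b, hb, hab.mono hp⟩
  choose! a ha b hb hab using hcross
  have hnonadj : ∀ x ∈ X, ∀ x' ∈ X, x ≠ x' → ¬ G.Adj (a x) (a x') ∧ ¬ G.Adj (a x) (b x') ∧
      ¬ G.Adj (b x) (b x') := by
    intro x hx x' hx' hne
    obtain ⟨hxx', hyy', hxy'⟩ := far x hx x' hx' hne
    have hyx' := (far x' hx' x hx hne.symm).2.2
    rw [edist_comm] at hyx'
    obtain ⟨haa', hab'⟩ := (hab x hx).not_adj hr (hab x' hx') hxx' hyy' hxy' hyx'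
    exact ⟨haa', hab', ((hab x hx).symm.not_adj hr (hab x' hx').symm hyy' hxx' hyx' hxy').1⟩
  exact hasInducedMatching_of_edges ha hb (fun x hx => (hab x hx).1)
    (fun x hx x' hx' hne => (hnonadj x hx x' hx' hne).1)
    (fun x hx x' hx' hne => (hnonadj x hx x' hx' hne).2.2)
    (fun x hx x' hx' hne => (hnonadj x hx x' hx' hne).2.1)

end SimpleGraph

theorem stmt_14_general {V : Type*} [DecidableEq V] (G : SimpleGraph V) (r w : ℕ)
    (hodd : Odd r) (A : Set V)
    (h : ∃ (X Y : Finset V) (f : V → V), (X : Set V) ⊆ A ∧ (Y : Set V) ⊆ Aᶜ ∧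
      X.card = w + 1 ∧ Y.card = w + 1 ∧
      (∀ x ∈ X, ∀ y ∈ X, ¬ (G.power r).Adj x y) ∧
      (∀ x ∈ Y, ∀ y ∈ Y, ¬ (G.power r).Adj x y) ∧
      Set.InjOn f X ∧ Y = X.image f ∧
      (∀ x ∈ X, (G.power r).Adj x (f x)) ∧
      (∀ x ∈ X, ∀ y ∈ Y, (G.power r).Adj x y → y = f x)) :
    ∃ (X Y : Finset V) (f : V → V), (X : Set V) ⊆ A ∧ (Y : Set V) ⊆ Aᶜ ∧
      X.card = w + 1 ∧ Y.card = w + 1 ∧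
      (∀ x ∈ X, ∀ y ∈ X, ¬ G.Adj x y) ∧
      (∀ x ∈ Y, ∀ y ∈ Y, ¬ G.Adj x y) ∧
      Set.InjOn f X ∧ Y = X.image f ∧
      (∀ x ∈ X, G.Adj x (f x)) ∧
      (∀ x ∈ X, ∀ y ∈ Y, G.Adj x y → y = f x) :=
  SimpleGraph.HasInducedMatching.of_power hodd h

/-- For odd `r ≥ 1` and any partition `(A, Aᶜ)` of the vertices, if `G^r` has an induced
matching of size `w + 1` between `A` and `Aᶜ`, then so does `G`. -/
theorem stmt_14 {V : Type*} [DecidableEq V] (G : SimpleGraph V) (r w : ℕ)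
    (hodd : Odd r) (hr : 1 ≤ r) (A : Set V)
    (h : ∃ (X Y : Finset V) (f : V → V), (X : Set V) ⊆ A ∧ (Y : Set V) ⊆ Aᶜ ∧
      X.card = w + 1 ∧ Y.card = w + 1 ∧
      (∀ x ∈ X, ∀ y ∈ X, ¬ (G.power r).Adj x y) ∧
      (∀ x ∈ Y, ∀ y ∈ Y, ¬ (G.power r).Adj x y) ∧
      Set.InjOn f X ∧ Y = X.image f ∧
      (∀ x ∈ X, (G.power r).Adj x (f x)) ∧
      (∀ x ∈ X, ∀ y ∈ Y, (G.power r).Adj x y → y = f x)) :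
    ∃ (X Y : Finset V) (f : V → V), (X : Set V) ⊆ A ∧ (Y : Set V) ⊆ Aᶜ ∧
      X.card = w + 1 ∧ Y.card = w + 1 ∧
      (∀ x ∈ X, ∀ y ∈ X, ¬ G.Adj x y) ∧
      (∀ x ∈ Y, ∀ y ∈ Y, ¬ G.Adj x y) ∧
      Set.InjOn f X ∧ Y = X.image f ∧
      (∀ x ∈ X, G.Adj x (f x)) ∧
      (∀ x ∈ X, ∀ y ∈ Y, G.Adj x y → y = f x) :=
  stmt_14_general G r w hodd A h
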